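/- arXiv:1410.7834 — 4 statements merged into one kernel-verified Lean document; each statement's English description precedes it below -/
import Mathlib

section
/- Let $2 \le k \le n-2$ and suppose $f\colon \binom{[n]}{k} \to \{0,1\}$ (a Boolean function on the slice) is exactly equal to an affine function $\sum_{i=1}^n c_i x_i$. Then either $f$ is constant ($f \equiv 0$ or $f \equiv 1$), or there exists $i \in [n]$ such that $f = x_i$ or $f = 1 - x_i$. -/
/-!
Comparing `T` with `T \ P ∪ Q` for disjoint `P`, `Q` of equal size shows that
`∑_P c - ∑_Q c` is a difference of two Boolean values, hence lies in `{-1, 0, 1}`.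
With `|P| = |Q| = 1` all coefficients lie in `{m, m + 1}` for `m = min c`; with `|P| = |Q| = 2`
(possible since `2 ≤ k ≤ n - 2`) one of the two level sets has at most one element. So `c` is
constant off a single coordinate `i₀`, and `f = k a + b x_{i₀}` with both values Boolean.
-/

/-- The theSlice `[n] choose k`: all `k`-element subsets of `Fin n`. -/
def theSlice (n k : ℕ) : Finset (Finset (Fin n)) := Finset.powersetCard k Finset.univ

open Finset

lemma mem_theSlice {n k : ℕ} {T : Finset (Fin n)} : T ∈ theSlice n k ↔ T.card = k := by
  simp [theSlice]

lemma exists_superset_disjoint_mem_theSlice {n k : ℕ} {P Q : Finset (Fin n)}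
    (hPQ : Disjoint P Q) (hP : P.card ≤ k) (hQ : k + Q.card ≤ n) :
    ∃ T ∈ theSlice n k, P ⊆ T ∧ Disjoint T Q := by
  have hQc : k ≤ Qᶜ.card := by rw [card_compl, Fintype.card_fin]; omega
  obtain ⟨T, hPT, hTQ, hT⟩ :=
    exists_subsuperset_card_eq (subset_compl_iff_disjoint_right.mpr hPQ) hP hQc
  exact ⟨T, mem_theSlice.mpr hT, hPT, subset_compl_iff_disjoint_right.mp hTQ⟩

lemma exists_mem_theSlice_sum_sub_sum_eq {n k : ℕ} (c : Fin n → ℝ) {P Q : Finset (Fin n)}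
    (hPQ : Disjoint P Q) (hcard : P.card = Q.card) (hP : P.card ≤ k) (hQ : k + Q.card ≤ n) :
    ∃ T ∈ theSlice n k, ∃ T' ∈ theSlice n k,
      ∑ i ∈ T, c i - ∑ i ∈ T', c i = ∑ i ∈ P, c i - ∑ i ∈ Q, c i := by
  obtain ⟨T, hT, hPT, hTQ⟩ := exists_superset_disjoint_mem_theSlice hPQ hP hQ
  have hdisj : Disjoint (T \ P) Q := disjoint_of_subset_left sdiff_subset hTQ
  refine ⟨T, hT, T \ P ∪ Q, ?_, ?_⟩
  · rw [mem_theSlice] at hT ⊢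
    rw [card_union_of_disjoint hdisj, card_sdiff_of_subset hPT]
    omega
  · rw [sum_union hdisj, ← sum_sdiff hPT]
    ring

lemma sum_sub_sum_eq_neg_one_or_zero_or_one {n k : ℕ} {f : Finset (Fin n) → ℝ}
    {c : Fin n → ℝ} (hbool : ∀ T ∈ theSlice n k, f T = 0 ∨ f T = 1)
    (haff : ∀ T ∈ theSlice n k, f T = ∑ i ∈ T, c i) {P Q : Finset (Fin n)}
    (hPQ : Disjoint P Q) (hcard : P.card = Q.card) (hP : P.card ≤ k) (hQ : k + Q.card ≤ n) :
    ∑ i ∈ P, c i - ∑ i ∈ Q, c i = -1 ∨ ∑ i ∈ P, c i - ∑ i ∈ Q, c i = 0 ∨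
      ∑ i ∈ P, c i - ∑ i ∈ Q, c i = 1 := by
  obtain ⟨T, hT, T', hT', hdiff⟩ := exists_mem_theSlice_sum_sub_sum_eq c hPQ hcard hP hQ
  rw [← hdiff, ← haff T hT, ← haff T' hT']
  rcases hbool T hT with h | h <;> rcases hbool T' hT' with h' | h' <;> simp [h, h']

lemma exists_forall_ne_eq_of_subsingleton {ι α : Type*} [Nonempty ι] {c : ι → α} {a : α}
    (h : {i | c i ≠ a}.Subsingleton) : ∃ i₀, ∀ i ≠ i₀, c i = a := by
  by_cases hex : ∃ i₀, c i₀ ≠ a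
  · obtain ⟨i₀, hi₀⟩ := hex
    exact ⟨i₀, fun i hi => by_contra fun hne => hi (h hne hi₀)⟩
  · push Not at hex
    exact ⟨Classical.arbitrary ι, fun i _ => hex i⟩

lemma exists_forall_ne_eq_of_sum_sub_sum {ι : Type*} [Fintype ι] [DecidableEq ι] [Nonempty ι]
    {c : ι → ℝ}
    (hc : ∀ P Q : Finset ι, Disjoint P Q → P.card = Q.card → P.card ≤ 2 →
      ∑ i ∈ P, c i - ∑ i ∈ Q, c i = -1 ∨ ∑ i ∈ P, c i - ∑ i ∈ Q, c i = 0 ∨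
        ∑ i ∈ P, c i - ∑ i ∈ Q, c i = 1) :
    ∃ i₀ a, ∀ i ≠ i₀, c i = a := by
  obtain ⟨j₀, hj₀⟩ := Finite.exists_min c
  set m := c j₀
  have hval : ∀ i, c i = m ∨ c i = m + 1 := by
    intro i
    by_cases hi : i = j₀
    · exact Or.inl (congrArg c hi)
    · have hge := hj₀ i
      have := hc {i} {j₀} (disjoint_singleton.mpr hi) rfl (by simp)
      simp only [sum_singleton] at this
      rcases this with h | h | h
      · linarith
      · exact Or.inl (by linarith)
      · exact Or.inr (by linarith)
  have hno_pairs : ∀ i i' j j', i ≠ i' → j ≠ j' →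
      c i = m + 1 → c i' = m + 1 → c j = m → c j' = m → False := by
    intro i i' j j' hii' hjj' hi hi' hj hj'
    have hne : ∀ x y, c x = m → c y = m + 1 → x ≠ y := fun x y hx hy hxy => by
      subst hxy; linarith
    have := hc {i, i'} {j, j'}
      (by simp [hne j i hj hi, hne j i' hj hi', hne j' i hj' hi, hne j' i' hj' hi'])
      (by simp [hii', hjj']) (by simp [hii'])
    rw [sum_pair hii', sum_pair hjj', hi, hi', hj, hj'] at this
    rcases this with h | h | h <;> linarith
  by_cases htwo : ∃ i i', i ≠ i' ∧ c i = m + 1 ∧ c i' = m + 1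
  · obtain ⟨i, i', hii', hi, hi'⟩ := htwo
    obtain ⟨i₀, h₀⟩ := exists_forall_ne_eq_of_subsingleton (a := m + 1) fun j hj j' hj' =>
      by_contra fun hjj' =>
        hno_pairs i i' j j' hii' hjj' hi hi'
          ((hval j).resolve_right hj) ((hval j').resolve_right hj')
    exact ⟨i₀, m + 1, h₀⟩
  · obtain ⟨i₀, h₀⟩ := exists_forall_ne_eq_of_subsingleton (a := m) fun i hi i' hi' =>
      by_contra fun hii' =>
        htwo ⟨i, i', hii', (hval i).resolve_left hi, (hval i').resolve_left hi'⟩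
    exact ⟨i₀, m, h₀⟩

lemma sum_eq_card_mul_add_of_forall_ne_eq {ι : Type*} [DecidableEq ι] {c : ι → ℝ} {i₀ : ι}
    {a : ℝ} (h : ∀ i ≠ i₀, c i = a) (T : Finset ι) :
    ∑ i ∈ T, c i = T.card * a + (c i₀ - a) * if i₀ ∈ T then 1 else 0 := by
  have hc : ∀ i, c i = a + if i₀ = i then c i₀ - a else 0 := by
    intro i
    split_ifs with hi
    · rw [hi]; ring
    · rw [h i (Ne.symm hi), add_zero]
  rw [sum_congr rfl fun i _ => hc i, sum_add_distrib, sum_const, sum_ite_eq, nsmul_eq_mul]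
  split_ifs <;> ring

/-- a Boolean function on the theSlice (2 ≤ k ≤ n-2) which is exactly an
affine function `∑ c_i x_i` is constant, a dictator `x_i`, or an anti-dictator `1 - x_i`. -/
theorem boolean_affine_on_slice (n k : ℕ) (hk : 2 ≤ k) (hkn : k + 2 ≤ n)
    (f : Finset (Fin n) → ℝ) (c : Fin n → ℝ)
    (hbool : ∀ T ∈ theSlice n k, f T = 0 ∨ f T = 1)
    (haff : ∀ T ∈ theSlice n k, f T = ∑ i ∈ T, c i) :
    (∀ T ∈ theSlice n k, f T = 0) ∨ (∀ T ∈ theSlice n k, f T = 1) ∨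
    (∃ i : Fin n, (∀ T ∈ theSlice n k, f T = if i ∈ T then 1 else 0) ∨
                  (∀ T ∈ theSlice n k, f T = if i ∈ T then 0 else 1)) := by
  have : Nonempty (Fin n) := ⟨⟨0, by omega⟩⟩
  obtain ⟨i₀, a, ha⟩ := exists_forall_ne_eq_of_sum_sub_sum fun P Q hPQ hcard hP =>
    sum_sub_sum_eq_neg_one_or_zero_or_one hbool haff hPQ hcard (by omega) (by omega)
  have hf : ∀ T ∈ theSlice n k, f T = k * a + (c i₀ - a) * if i₀ ∈ T then 1 else 0 := by
    intro T hT
    rw [haff T hT, sum_eq_card_mul_add_of_forall_ne_eq ha, mem_theSlice.mp hT]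
  obtain ⟨T₁, hT₁, hi₀T₁, -⟩ := exists_superset_disjoint_mem_theSlice (k := k)
    (disjoint_empty_right {i₀}) (by simp; omega) (by simp; omega)
  obtain ⟨T₂, hT₂, -, hi₀T₂⟩ := exists_superset_disjoint_mem_theSlice (k := k)
    (disjoint_empty_left {i₀}) (by simp) (by simp; omega)
  have h₁ := hbool T₁ hT₁
  have h₂ := hbool T₂ hT₂
  rw [hf T₁ hT₁, if_pos (singleton_subset_iff.mp hi₀T₁)] at h₁
  rw [hf T₂ hT₂, if_neg (disjoint_singleton_right.mp hi₀T₂)] at h₂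
  rcases h₁ with h₁ | h₁ <;> rcases h₂ with h₂ | h₂
  · exact Or.inl fun T hT => by rw [hf T hT]; split_ifs <;> linarith
  · exact Or.inr (Or.inr ⟨i₀, Or.inr fun T hT => by rw [hf T hT]; split_ifs <;> linarith⟩)
  · exact Or.inr (Or.inr ⟨i₀, Or.inl fun T hT => by rw [hf T hT]; split_ifs <;> linarith⟩)
  · exact Or.inr (Or.inl fun T hT => by rw [hf T hT]; split_ifs <;> linarith)
end

section
/- Let $X$ be hypergeometric with parameters $n, k, t$: $\Pr[X = s] = \binom{t}{s}\binom{n-t}{k-s}/\binom{n}{k}$, where $k, t \le n/2$. Then there exists an absolute constant $\gamma_0 > 0$ and an absolute constant $c > 0$ such that: if $\Pr[X \in \{m, m+1\}] \ge 1 - \gamma_0$ for some integer $m$, then $\Pr[X = 0] \ge c$ and $t \le (3/2)(n/k)$. -/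
/-- The hypergeometric probability `Pr[X = s]` with parameters `n, k, t`:
`C(t,s) C(n-t,k-s) / C(n,k)` (zero for `s > k`). -/
noncomputable def hypPr (n k t s : ℕ) : ℝ :=
  if s ≤ k then ((t.choose s : ℝ) * ((n - t).choose (k - s) : ℝ)) / (n.choose k : ℝ) else 0

/-!
Write `p s` for `Pr[X = s]`. Consecutive probabilities satisfy
`p (s+1) (s+1) (n-t-k+s+1) = p s (t-s) (k-s)`, and while `s + 2 ≤ min k t` each of the four
factors changes by at most a factor `2` from `s` to `s + 1`, so `p (s+1)^2 ≤ 16 p s p (s+2)`.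
Hence if `99/100` of the mass sits on `{m, m+1}`, the larger of `p m`, `p (m+1)` would pass a
constant fraction of itself to its outer neighbour; the escape `m = 0` is closed once the mean
`kt/n` exceeds `1`, since then `p 0 ≤ p 1`. Near the top value `min k t = t` the same identity
gives `p t ≤ p (t-1) / 4` and `p (t-1) ≤ (2/3) p (t-2)` as soon as `t ≥ 4`, so the mass cannot
sit there either. A mean above `3/2` forces `k, t ≥ 4`, so concentration forces `kt ≤ 3n/2`,
which is the bound on `t`; then `p 0 = C(n-t,k)/C(n,k) ≥ (1 - k/(n+1-t))^t ≥ e^{-12}`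
when `t ≤ k`, and the symmetry `k ↔ t` of the distribution covers `k < t`.
-/

open Finset Real

theorem Nat.choose_mul_choose_sub_comm (N a b : ℕ) :
    N.choose a * (N - a).choose b = N.choose b * (N - b).choose a := by
  have ha := Nat.choose_mul (n := N) (Nat.le_add_right a b)
  have hb := Nat.choose_mul (n := N) (Nat.le_add_left b a)
  rw [Nat.add_sub_cancel_left] at ha
  rw [Nat.add_sub_cancel] at hb
  rw [← ha, ← hb, Nat.choose_symm_add]

theorem exp_neg_four_mul_le_one_sub_pow {q : ℝ} (hq0 : 0 ≤ q) (hq : q ≤ 3 / 4) (T : ℕ) :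
    exp (-(4 * q * T)) ≤ (1 - q) ^ T := by
  have hbase : exp (-(4 * q)) ≤ 1 - q := by
    rw [exp_neg, inv_le_iff_one_le_mul₀ (exp_pos _)]
    nlinarith [add_one_le_exp (4 * q)]
  calc exp (-(4 * q * T)) = exp (-(4 * q)) ^ T := by rw [← exp_nat_mul]; ring_nf
    _ ≤ (1 - q) ^ T := pow_le_pow_left₀ (exp_pos _).le hbase T

theorem one_sub_pow_mul_choose_le_choose_sub {n k T : ℕ} {q : ℝ} (hq0 : 0 ≤ q) (hq1 : q ≤ 1)
    (hkT : k + T ≤ n) (hk : (k : ℝ) ≤ q * (n + 1 - T)) :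
    (1 - q) ^ T * n.choose k ≤ (n - T).choose k := by
  induction T with
  | zero => simp
  | succ T ih =>
    obtain ⟨N, rfl⟩ : ∃ N, n = N + 1 + T := ⟨n - T - 1, by omega⟩
    rw [show N + 1 + T - T = N + 1 by omega] at ih
    rw [show N + 1 + T - (T + 1) = N by omega]
    push_cast at hk ih ⊢
    have hstep : (1 - q) * (N + 1).choose k ≤ (N.choose k : ℝ) := by
      have h := congrArg (Nat.cast (R := ℝ)) (Nat.choose_mul_succ_eq N k)
      push_cast [Nat.cast_sub (show k ≤ N + 1 by omega)] at h
      refine le_of_mul_le_mul_right ?_ (by positivity : (0 : ℝ) < N + 1)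
      rw [h]
      nlinarith [(Nat.cast_nonneg _ : (0 : ℝ) ≤ (N + 1).choose k)]
    calc (1 - q) ^ (T + 1) * (N + 1 + T).choose k
        = (1 - q) * ((1 - q) ^ T * (N + 1 + T).choose k) := by ring
      _ ≤ (1 - q) * (N + 1).choose k :=
          mul_le_mul_of_nonneg_left (ih (by omega) (by nlinarith)) (by linarith)
      _ ≤ N.choose k := hstep

theorem hypPr_nonneg (n k t s : ℕ) : 0 ≤ hypPr n k t s := by
  unfold hypPr; split <;> positivity

theorem hypPr_eq_zero_of_lt {n k t s : ℕ} (h : t < s) : hypPr n k t s = 0 := by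
  simp [hypPr, Nat.choose_eq_zero_of_lt h]

theorem sum_range_hypPr {n k t : ℕ} (hkn : k ≤ n) (htn : t ≤ n) :
    ∑ s ∈ range (k + 1), hypPr n k t s = 1 := by
  have hvdm : ∑ s ∈ range (k + 1), (t.choose s * (n - t).choose (k - s) : ℝ) = n.choose k := by
    rw [← Nat.add_sub_of_le htn, Nat.add_choose_eq,
      Nat.sum_antidiagonal_eq_sum_range_succ (fun i j => t.choose i * (n - t).choose j)]
    push_cast
    simp
  have hC : (n.choose k : ℝ) ≠ 0 := by exact_mod_cast (Nat.choose_pos hkn).ne'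
  calc ∑ s ∈ range (k + 1), hypPr n k t s
      = (∑ s ∈ range (k + 1), (t.choose s * (n - t).choose (k - s) : ℝ)) / n.choose k := by
        rw [sum_div]
        exact sum_congr rfl fun s hs => if_pos (Nat.lt_succ_iff.mp (mem_range.mp hs))
    _ = 1 := by rw [hvdm, div_self hC]

theorem sum_hypPr_le_one {n k t : ℕ} (hkn : k ≤ n) (htn : t ≤ n) (S : Finset ℕ) :
    ∑ s ∈ S, hypPr n k t s ≤ 1 := by
  calc ∑ s ∈ S, hypPr n k t s = ∑ s ∈ S.filter (· ≤ k), hypPr n k t s := by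
        rw [sum_filter]
        exact sum_congr rfl fun s _ => by unfold hypPr; split_ifs <;> rfl
    _ ≤ ∑ s ∈ range (k + 1), hypPr n k t s :=
        sum_le_sum_of_subset_of_nonneg (fun s hs => by simp at hs ⊢; omega)
          fun s _ _ => hypPr_nonneg n k t s
    _ = 1 := sum_range_hypPr hkn htn

theorem hypPr_le_one {n k t : ℕ} (hkn : k ≤ n) (htn : t ≤ n) (s : ℕ) : hypPr n k t s ≤ 1 := by
  simpa using sum_hypPr_le_one hkn htn {s}

theorem hypPr_add_add_le_one {n k t : ℕ} (hkn : k ≤ n) (htn : t ≤ n) (s : ℕ) :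
    hypPr n k t s + hypPr n k t (s + 1) + hypPr n k t (s + 2) ≤ 1 := by
  have h := sum_hypPr_le_one hkn htn {s, s + 1, s + 2}
  rwa [sum_insert (by simp), sum_insert (by simp), sum_singleton, ← add_assoc] at h

theorem hypPr_comm {n k t : ℕ} (hkn : k ≤ n) (htn : t ≤ n) (s : ℕ) :
    hypPr n k t s = hypPr n t k s := by
  unfold hypPr
  by_cases hsk : s ≤ k <;> by_cases hst : s ≤ t
  · rw [if_pos hsk, if_pos hst, div_eq_div_iff (by exact_mod_cast (Nat.choose_pos hkn).ne')
      (by exact_mod_cast (Nat.choose_pos htn).ne')]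
    have hk := Nat.choose_mul (n := n) hsk
    have ht := Nat.choose_mul (n := n) hst
    have hsym := Nat.choose_mul_choose_sub_comm (n - s) (t - s) (k - s)
    rw [show n - s - (t - s) = n - t by omega, show n - s - (k - s) = n - k by omega] at hsym
    have key : t.choose s * (n - t).choose (k - s) * n.choose t =
        k.choose s * (n - k).choose (t - s) * n.choose k := by
      calc _ = n.choose s * ((n - s).choose (t - s) * (n - t).choose (k - s)) := by
            rw [← mul_assoc, ← ht]; ring
        _ = _ := by rw [hsym, ← mul_assoc, ← hk]; ring
    exact_mod_cast key
  · simp [if_neg hst, Nat.choose_eq_zero_of_lt (not_le.mp hst)]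
  · simp [if_neg hsk, Nat.choose_eq_zero_of_lt (not_le.mp hsk)]
  · rw [if_neg hsk, if_neg hst]

theorem hypPr_succ_mul {n k t s : ℕ} (hsk : s < k) (hst : s < t) (hn : k + t ≤ n) :
    hypPr n k t (s + 1) * ((s + 1) * (n - t - k + s + 1)) =
      hypPr n k t s * ((t - s) * (k - s)) := by
  have ht : (t.choose (s + 1) * (s + 1) : ℝ) = t.choose s * (t - s) := by
    have h := congrArg (Nat.cast (R := ℝ)) (Nat.choose_succ_right_eq t s)
    push_cast [Nat.cast_sub hst.le] at h
    exact h
  have hnt : ((n - t).choose (k - (s + 1)) * (n - t - k + s + 1) : ℝ) =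
      (n - t).choose (k - s) * (k - s) := by
    have h := Nat.choose_succ_right_eq (n - t) (k - (s + 1))
    rw [show k - (s + 1) + 1 = k - s by omega] at h
    have h' := congrArg (Nat.cast (R := ℝ)) h
    push_cast [Nat.cast_sub (show k - (s + 1) ≤ n - t by omega), Nat.cast_sub hsk.le,
      Nat.cast_sub hsk, Nat.cast_sub (show t ≤ n by omega)] at h'
    linear_combination -h'
  unfold hypPr
  rw [if_pos (show s + 1 ≤ k from hsk), if_pos hsk.le, div_mul_eq_mul_div, div_mul_eq_mul_div]
  congr 1
  linear_combination ((n - t).choose (k - (s + 1)) * (n - t - k + s + 1) : ℝ) * ht +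
    (t.choose s * (t - s) : ℝ) * hnt

theorem hypPr_succ_sq_le {n k t s : ℕ} (hsk : s + 2 ≤ k) (hst : s + 2 ≤ t) (hn : k + t ≤ n) :
    hypPr n k t (s + 1) ^ 2 ≤ 16 * hypPr n k t s * hypPr n k t (s + 2) := by
  have hA := hypPr_succ_mul (s := s) (by omega) (by omega) hn
  have hB := hypPr_succ_mul (s := s + 1) (by omega) (by omega) hn
  have hP := hypPr_nonneg n k t s
  have hR := hypPr_nonneg n k t (s + 2)
  obtain ⟨u, rfl⟩ := Nat.exists_eq_add_of_le hst
  obtain ⟨v, rfl⟩ := Nat.exists_eq_add_of_le hsk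
  obtain ⟨w, rfl⟩ := Nat.exists_eq_add_of_le hn
  generalize hypPr _ _ _ s = P, hypPr _ _ _ (s + 1) = Q, hypPr _ _ _ (s + 2) = R at hA hB hP hR ⊢
  push_cast at hA hB
  have hpos : (0 : ℝ) < (s + 1) * (w + s + 1) * ((u + 1) * (v + 1)) := by positivity
  refine le_of_mul_le_mul_right ?_ hpos
  calc Q ^ 2 * ((s + 1) * (w + s + 1) * ((u + 1) * (v + 1)))
      = P * R * ((u + 2) * (v + 2) * ((s + 2) * (w + s + 2))) := by
        linear_combination (Q * ((u + 1) * (v + 1))) * hA - (P * ((u + 2) * (v + 2))) * hB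
    _ ≤ P * R * ((2 * (u + 1)) * (2 * (v + 1)) * ((2 * (s + 1)) * (2 * (w + s + 1)))) := by
        gcongr <;> linarith
    _ = 16 * P * R * ((s + 1) * (w + s + 1) * ((u + 1) * (v + 1))) := by ring

theorem hypPr_zero_le_one {n k t : ℕ} (hn : k + t ≤ n) (hmean : n < k * t) :
    hypPr n k t 0 ≤ hypPr n k t 1 := by
  have hk : 0 < k := Nat.pos_of_mul_pos_right (by omega : 0 < k * t)
  have ht : 0 < t := Nat.pos_of_mul_pos_left (by omega : 0 < k * t)
  have h := hypPr_succ_mul (s := 0) hk ht hn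
  have hgap : (n : ℝ) - t - k + 1 ≤ t * k := by
    have : ((n + 1 : ℕ) : ℝ) ≤ ((k * t + k + t : ℕ) : ℝ) := by exact_mod_cast (by omega)
    push_cast at this; linarith
  have hpos : (0 : ℝ) < t * k := by positivity
  simp only [zero_add, add_zero, Nat.cast_zero, sub_zero, one_mul] at h
  refine le_of_mul_le_mul_right ?_ hpos
  rw [← h]
  exact mul_le_mul_of_nonneg_left hgap (hypPr_nonneg n k t 1)

theorem hypPr_add_hypPr_succ_lt_of_add_two_le {n k t m : ℕ} (hmk : m + 2 ≤ k) (hmt : m + 2 ≤ t)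
    (hn : k + t ≤ n) (hmean : n < k * t) :
    hypPr n k t m + hypPr n k t (m + 1) < 99 / 100 := by
  by_contra! hcon
  have hkn : k ≤ n := by omega
  have htn : t ≤ n := by omega
  have hP := hypPr_nonneg n k t m
  have hQ := hypPr_nonneg n k t (m + 1)
  rcases le_or_gt (hypPr n k t m) (hypPr n k t (m + 1)) with hPQ | hQP
  · have hR := hypPr_add_add_le_one hkn htn m
    have hsq := hypPr_succ_sq_le hmk hmt hn
    nlinarith [hypPr_nonneg n k t (m + 2)]
  · cases m with
    | zero => exact hQP.not_ge (hypPr_zero_le_one hn hmean)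
    | succ m =>
      have hS := hypPr_add_add_le_one hkn htn m
      have hsq := hypPr_succ_sq_le (s := m) (by omega) (by omega) hn
      nlinarith [hypPr_nonneg n k t m]

theorem hypPr_add_hypPr_succ_lt_of_le_add_one {n k t m : ℕ} (htk : t ≤ k) (ht : 4 ≤ t)
    (h2k : 2 * k ≤ n) (hm : t ≤ m + 1) :
    hypPr n k t m + hypPr n k t (m + 1) < 99 / 100 := by
  by_contra! hcon
  obtain ⟨s, rfl⟩ : ∃ s, t = s + 2 := ⟨t - 2, by omega⟩
  have hn : k + (s + 2) ≤ n := by omega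
  have htop : 99 / 100 ≤ hypPr n k (s + 2) (s + 1) + hypPr n k (s + 2) (s + 2) := by
    rcases (by omega : m = s + 1 ∨ m = s + 2 ∨ s + 2 < m) with rfl | rfl | hm'
    · exact hcon
    · rw [hypPr_eq_zero_of_lt (by omega : s + 2 < s + 2 + 1)] at hcon
      linarith [hypPr_nonneg n k (s + 2) (s + 1)]
    · rw [hypPr_eq_zero_of_lt hm', hypPr_eq_zero_of_lt (by omega : s + 2 < m + 1)] at hcon
      norm_num at hcon
  have h1 := hypPr_succ_mul (s := s + 1) (by omega) (by omega) hn
  have h2 := hypPr_succ_mul (s := s) (by omega) (by omega) hn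
  have hP := hypPr_le_one (t := s + 2) (by omega : k ≤ n) (by omega) s
  have hR := hypPr_nonneg n k (s + 2) (s + 2)
  clear hcon
  obtain ⟨v, rfl⟩ := Nat.exists_eq_add_of_le htk
  obtain ⟨w, rfl⟩ := Nat.exists_eq_add_of_le hn
  have hvw : (v : ℝ) ≤ w := by exact_mod_cast (by omega : v ≤ w)
  have hs : (2 : ℝ) ≤ s := by exact_mod_cast (by omega : 2 ≤ s)
  generalize hypPr _ _ _ s = P, hypPr _ _ _ (s + 1) = Q, hypPr _ _ _ (s + 1 + 1) = R at *
  push_cast at h1 h2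
  have hRQ : 4 * R ≤ Q := by
    refine le_of_mul_le_mul_right ?_ (by positivity : (0 : ℝ) < v + 1)
    calc 4 * R * (v + 1) = R * (4 * (v + 1)) := by ring
      _ ≤ R * ((s + 2) * (w + s + 2)) := mul_le_mul_of_nonneg_left (by nlinarith) hR
      _ = Q * (v + 1) := by linear_combination h1
  have hQP : 3 * Q ≤ 2 * P := by
    refine le_of_mul_le_mul_right ?_ (by positivity : (0 : ℝ) < v + 2)
    have hQ : 0 ≤ Q := by linarith
    calc 3 * Q * (v + 2) = Q * (3 * (v + 2)) := by ring
      _ ≤ Q * ((s + 1) * (w + s + 1)) := mul_le_mul_of_nonneg_left (by nlinarith) hQ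
      _ = 2 * P * (v + 2) := by linear_combination h2
  linarith

theorem hypPr_add_hypPr_succ_lt_of_three_mul_lt {n k t : ℕ} (h2k : 2 * k ≤ n) (h2t : 2 * t ≤ n)
    (hmean : 3 * n < 2 * (k * t)) (m : ℕ) :
    hypPr n k t m + hypPr n k t (m + 1) < 99 / 100 := by
  have hn : k + t ≤ n := by omega
  have hk4 : 4 ≤ k := by nlinarith
  have ht4 : 4 ≤ t := by nlinarith
  by_cases hmid : m + 2 ≤ k ∧ m + 2 ≤ t
  · exact hypPr_add_hypPr_succ_lt_of_add_two_le hmid.1 hmid.2 hn (by nlinarith)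
  · rcases le_total t k with htk | hkt
    · exact hypPr_add_hypPr_succ_lt_of_le_add_one htk ht4 h2k (by omega)
    · rw [hypPr_comm (by omega) (by omega) m, hypPr_comm (by omega) (by omega) (m + 1)]
      exact hypPr_add_hypPr_succ_lt_of_le_add_one hkt hk4 h2t (by omega)

theorem exp_neg_twelve_le_hypPr_zero {n k t : ℕ} (htk : t ≤ k) (h2k : 2 * k ≤ n)
    (hmean : 2 * (k * t) ≤ 3 * n) : exp (-12) ≤ hypPr n k t 0 := by
  have hC : (0 : ℝ) < n.choose k := by exact_mod_cast Nat.choose_pos (by omega)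
  have htk' : (t : ℝ) ≤ k := by exact_mod_cast htk
  have h2k' : 2 * (k : ℝ) ≤ n := by exact_mod_cast h2k
  have hmean' : 2 * ((k : ℝ) * t) ≤ 3 * n := by exact_mod_cast hmean
  have hD : (0 : ℝ) < n + 1 - t := by linarith
  set q : ℝ := k / (n + 1 - t) with hq
  have hq0 : 0 ≤ q := by positivity
  have hq34 : q ≤ 3 / 4 := by rw [hq, div_le_iff₀ hD]; nlinarith
  have hqt : q * t ≤ 3 := by rw [hq, div_mul_eq_mul_div, div_le_iff₀ hD]; linarith
  have hk : (k : ℝ) ≤ q * (n + 1 - t) := by rw [hq, div_mul_cancel₀ _ hD.ne']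
  have hp0 : hypPr n k t 0 = (n - t).choose k / n.choose k := by simp [hypPr]
  rw [hp0, le_div_iff₀ hC]
  calc exp (-12) * n.choose k ≤ exp (-(4 * q * t)) * n.choose k := by
        gcongr; linarith
    _ ≤ (1 - q) ^ t * n.choose k := by gcongr; exact exp_neg_four_mul_le_one_sub_pow hq0 hq34 t
    _ ≤ (n - t).choose k :=
        one_sub_pow_mul_choose_le_choose_sub hq0 (by linarith) (by omega) hk

/-- there are absolute constants `γ₀, c > 0` such that whenever a
hypergeometric variable with parameters `k, t ≤ n/2` is concentrated on two consecutive
values `{m, m+1}` up to `γ₀`, it takes the value `0` with probability at least `c`,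
and `t ≤ (3/2)(n/k)`. -/
theorem hypergeometric_concentration :
    ∃ γ₀ > (0 : ℝ), ∃ c > (0 : ℝ), ∀ n k t : ℕ, 1 ≤ k → 1 ≤ t → 2 * k ≤ n → 2 * t ≤ n →
      ∀ m : ℕ, hypPr n k t m + hypPr n k t (m + 1) ≥ 1 - γ₀ →
        hypPr n k t 0 ≥ c ∧ (t : ℝ) ≤ (3 / 2) * ((n : ℝ) / k) := by
  refine ⟨1 / 100, by norm_num, exp (-12), exp_pos _, ?_⟩
  intro n k t hk _ h2k h2t m hcon
  have hmean : 2 * (k * t) ≤ 3 * n := by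
    by_contra h
    linarith [hypPr_add_hypPr_succ_lt_of_three_mul_lt h2k h2t (by omega) m]
  refine ⟨?_, ?_⟩
  · rcases le_total t k with htk | hkt
    · exact exp_neg_twelve_le_hypPr_zero htk h2k hmean
    · rw [hypPr_comm (by omega) (by omega)]
      exact exp_neg_twelve_le_hypPr_zero hkt h2t (by linarith)
  · have hmean' : 2 * ((k : ℝ) * t) ≤ 3 * n := by exact_mod_cast hmean
    rw [mul_div_assoc', le_div_iff₀ (by positivity)]
    linarith
end

section
/- Let $X$ be hypergeometric with parameters $n, k, t$ (number of successes when drawing $k$ from $n$ with $t$ marked), with $4 \le t, k \le n/2$. Let $s_0 = \lfloor (k+1)(t+1)/(n+2) \rfloor$ and suppose $s_0 \ge 1$. Then $s_0 + 2 \le \min(k, t)$, and the ratio $\rho_{s} = \Pr[X = s+1]/\Pr[X = s]$ satisfies $\rho_{s_0+1} \ge \rho_{s_0}/16$. -/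
/-- The consecutive-ratio `ρ_s = Pr[X = s+1] / Pr[X = s]`. -/
noncomputable def hypRatio (n k t s : ℕ) : ℝ := hypPr n k t (s + 1) / hypPr n k t s

/-!
Writing `m = n - t - k`, the closed form `ρ_s = (t-s)(k-s) / ((s+1)(m+s+1))` shows that
`ρ_s / ρ_{s+1}` is a product of four factors of the shape `x / (x-1)`, each at most `2` as long as
`s + 2 ≤ min k t`. That inequality holds at the mode because `2 (t+1) ≤ n + 2` and
`2 (k+1) ≤ n + 2` force `2 s₀ ≤ k + 1` and `2 s₀ ≤ t + 1`.
-/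

lemma choose_succ_mul_choose_sub_succ_mul (n k t s : ℕ) (hsk : s < k) (htk : t + k ≤ n) :
    t.choose (s + 1) * (n - t).choose (k - (s + 1)) * ((s + 1) * (n - t - k + s + 1)) =
      t.choose s * (n - t).choose (k - s) * ((t - s) * (k - s)) := by
  have hsucc_t := Nat.choose_succ_right_eq t s
  have hsucc_nt := Nat.choose_succ_right_eq (n - t) (k - (s + 1))
  rw [show k - (s + 1) + 1 = k - s by omega,
    show n - t - (k - (s + 1)) = n - t - k + s + 1 by omega] at hsucc_nt
  calc t.choose (s + 1) * (n - t).choose (k - (s + 1)) * ((s + 1) * (n - t - k + s + 1))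
      = (t.choose (s + 1) * (s + 1)) * ((n - t).choose (k - (s + 1)) * (n - t - k + s + 1)) := by
        ring
    _ = (t.choose s * (t - s)) * ((n - t).choose (k - s) * (k - s)) := by
        rw [hsucc_t, hsucc_nt]
    _ = t.choose s * (n - t).choose (k - s) * ((t - s) * (k - s)) := by ring

lemma hypPr_pos (n k t s : ℕ) (hst : s ≤ t) (hsk : s ≤ k) (htk : t + k ≤ n) :
    0 < hypPr n k t s := by
  rw [hypPr, if_pos hsk]
  have := Nat.choose_pos hst
  have := Nat.choose_pos (show k - s ≤ n - t by omega)
  have := Nat.choose_pos (show k ≤ n by omega)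
  positivity

lemma hypRatio_eq (n k t s : ℕ) (hsk : s < k) (hst : s < t) (htk : t + k ≤ n) :
    hypRatio n k t s =
      (((t - s) * (k - s) : ℕ) : ℝ) / (((s + 1) * (n - t - k + s + 1) : ℕ) : ℝ) := by
  have hpos := hypPr_pos n k t s hst.le hsk.le htk
  have hden : (((s + 1) * (n - t - k + s + 1) : ℕ) : ℝ) ≠ 0 := by positivity
  rw [hypRatio, div_eq_div_iff hpos.ne' hden]
  simp only [hypPr, if_pos (show s + 1 ≤ k from hsk), if_pos hsk.le]
  rw [div_mul_eq_mul_div, mul_div_assoc', mul_comm (((t - s) * (k - s) : ℕ) : ℝ)]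
  congr 1
  exact_mod_cast choose_succ_mul_choose_sub_succ_mul n k t s hsk htk

lemma hypRatio_div_sixteen_le_hypRatio_succ (n k t s : ℕ) (hsk : s + 2 ≤ k) (hst : s + 2 ≤ t)
    (htk : t + k ≤ n) :
    hypRatio n k t s / 16 ≤ hypRatio n k t (s + 1) := by
  rw [hypRatio_eq n k t s (by omega) (by omega) htk,
    hypRatio_eq n k t (s + 1) (by omega) (by omega) htk, div_div,
    div_le_div_iff₀ (by positivity) (by positivity)]
  -- each of the four factors `x` of `ρ_s / ρ_{s+1}` satisfies `x ≤ 2 (x - 1)`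
  have key : (t - s) * (k - s) * ((s + 1 + 1) * (n - t - k + (s + 1) + 1)) ≤
      (t - (s + 1)) * (k - (s + 1)) * ((s + 1) * (n - t - k + s + 1) * 16) :=
    calc (t - s) * (k - s) * ((s + 1 + 1) * (n - t - k + (s + 1) + 1))
        ≤ (2 * (t - (s + 1))) * (2 * (k - (s + 1))) *
            ((2 * (s + 1)) * (2 * (n - t - k + s + 1))) := by
          gcongr <;> omega
      _ = (t - (s + 1)) * (k - (s + 1)) * ((s + 1) * (n - t - k + s + 1) * 16) := by ring
  exact_mod_cast key

lemma two_mul_succ_mul_succ_div_le (k t n : ℕ) (htn : 2 * t ≤ n) :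
    2 * ((k + 1) * (t + 1) / (n + 2)) ≤ k + 1 :=
  calc 2 * ((k + 1) * (t + 1) / (n + 2))
      ≤ 2 * ((k + 1) * (t + 1) / (2 * (t + 1))) := by
        gcongr
        omega
    _ = 2 * ((k + 1) / 2) := by rw [Nat.mul_div_mul_right _ _ (by omega)]
    _ ≤ k + 1 := Nat.mul_div_le _ _

theorem hypergeometric_mode_ratio_general (n k t : ℕ) (ht : 4 ≤ t) (hk : 4 ≤ k)
    (htn : 2 * t ≤ n) (hkn : 2 * k ≤ n)
    (s₀ : ℕ) (hs₀ : s₀ = (k + 1) * (t + 1) / (n + 2)) :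
    s₀ + 2 ≤ min k t ∧ hypRatio n k t (s₀ + 1) ≥ hypRatio n k t s₀ / 16 := by
  have hk₀ : 2 * s₀ ≤ k + 1 := hs₀ ▸ two_mul_succ_mul_succ_div_le k t n htn
  have ht₀ : 2 * s₀ ≤ t + 1 :=
    hs₀ ▸ Nat.mul_comm (k + 1) (t + 1) ▸ two_mul_succ_mul_succ_div_le t k n hkn
  exact ⟨by omega, hypRatio_div_sixteen_le_hypRatio_succ n k t s₀ (by omega) (by omega) (by omega)⟩

/-- for `4 ≤ t, k ≤ n/2`, if the mode `s₀ = ⌊(k+1)(t+1)/(n+2)⌋` is at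
least `1`, then `s₀ + 2 ≤ min(k, t)` and `ρ_{s₀+1} ≥ ρ_{s₀}/16`. -/
theorem hypergeometric_mode_ratio (n k t : ℕ) (ht : 4 ≤ t) (hk : 4 ≤ k)
    (htn : 2 * t ≤ n) (hkn : 2 * k ≤ n)
    (s₀ : ℕ) (hs₀ : s₀ = (k + 1) * (t + 1) / (n + 2)) (hs₀1 : 1 ≤ s₀) :
    s₀ + 2 ≤ min k t ∧ hypRatio n k t (s₀ + 1) ≥ hypRatio n k t s₀ / 16 :=
  hypergeometric_mode_ratio_general n k t ht hk htn hkn s₀ hs₀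
end

section
/- Let $2 \le k \le n/2$, $p = k/n$, and suppose $f\colon \binom{[n]}{k} \to \{0,1\}$ satisfies $\|f - \ell\|^2 \le \epsilon$ for an affine function $\ell = \sum_i c_i x_i$ (uniform measure on the slice). Then there exist reals $c, d$ with $|c - d| = 1$ and a set $S \subseteq [n]$ with $|S| \le n/2$ such that $|c_j - c|^2 \le 8\epsilon/p$ for all $j \in S$ and $|c_j - d|^2 \le 8\epsilon/p$ for all $j \notin S$. -/
/-- Expectation over the uniform measure on the slice. -/
noncomputable def sliceExp (n k : ℕ) (g : Finset (Fin n) → ℝ) : ℝ :=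
  (∑ T ∈ theSlice n k, g T) / (n.choose k)

open Finset

section Exchange

variable {α : Type*} [DecidableEq α]

def exchange (i j : α) (T : Finset α) : Finset α := insert j (T.erase i)

variable {i j : α} {T : Finset α}

lemma card_exchange (hi : i ∈ T) (hj : j ∉ T) : #(exchange i j T) = #T := by
  rw [exchange, card_insert_of_notMem (fun h => hj (mem_of_mem_erase h)), card_erase_add_one hi]

lemma sum_exchange {M : Type*} [AddCommGroup M] (c : α → M) (hi : i ∈ T) (hj : j ∉ T) :
    ∑ x ∈ exchange i j T, c x = ∑ x ∈ T, c x - c i + c j := by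
  rw [exchange, sum_insert (fun h => hj (mem_of_mem_erase h)), sum_erase_eq_sub hi]
  abel

lemma exchange_exchange (hi : i ∈ T) (hj : j ∉ T) : exchange j i (exchange i j T) = T := by
  rw [exchange, exchange, erase_insert (fun h => hj (mem_of_mem_erase h)), insert_erase hi]

lemma injOn_exchange : Set.InjOn (exchange i j) {T | i ∈ T ∧ j ∉ T} :=
  Set.LeftInvOn.injOn fun _ hT => exchange_exchange hT.1 hT.2

lemma card_powersetCard_filter_mem_notMem [Fintype α] (hij : i ≠ j) {k : ℕ} (hk : 1 ≤ k) :
    #{T ∈ powersetCard k (univ : Finset α) | i ∈ T ∧ j ∉ T} =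
      (Fintype.card α - 2).choose (k - 1) := by
  have hcard : #((univ.erase i).erase j) = Fintype.card α - 2 := by
    rw [card_erase_of_mem (by simp [hij.symm]), card_erase_of_mem (mem_univ _), card_univ]
    omega
  rw [← hcard, ← card_powersetCard]
  refine card_nbij' (·.erase i) (insert i) (fun T hT => ?_) (fun T hT => ?_)
    (fun T hT => ?_) (fun T hT => ?_) <;>
    simp only [mem_coe, mem_filter, mem_powersetCard, subset_univ, true_and] at hT ⊢
  · rw [card_erase_of_mem hT.2.1, hT.1]
    exact ⟨fun x hx => by grind, rfl⟩
  · have hiT : i ∉ T := fun h => by simpa using hT.1 h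
    have hjT : j ∉ T := fun h => by simpa using hT.1 h
    rw [card_insert_of_notMem hiT, hT.2]
    grind
  · exact insert_erase hT.2.1
  · exact erase_insert fun h => by simpa using hT.1 h

end Exchange

lemma mul_choose_le_mul_choose_sub_two (n k : ℕ) (hk : 1 ≤ k) (hkn : 2 * k ≤ n) :
    k * n.choose k ≤ 2 * n * (n - 2).choose (k - 1) := by
  have hpascal : n * (n - 1).choose (k - 1) = n.choose k * k := by
    have := Nat.add_one_mul_choose_eq (n - 1) (k - 1)
    rwa [Nat.sub_add_cancel (by omega), Nat.sub_add_cancel hk] at this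
  have hstep : (n - 2).choose (k - 1) * (n - 1) = (n - 1).choose (k - 1) * (n - k) := by
    have := Nat.choose_mul_succ_eq (n - 2) (k - 1)
    rwa [show n - 2 + 1 = n - 1 by omega, show n - 1 - (k - 1) = n - k by omega] at this
  refine Nat.le_of_mul_le_mul_right ?_ (show 0 < n - k by omega)
  calc k * n.choose k * (n - k) = n * ((n - 2).choose (k - 1) * (n - 1)) := by
        rw [hstep, ← mul_assoc, hpascal]; ring
    _ ≤ n * ((n - 2).choose (k - 1) * (2 * (n - k))) := by gcongr; omega
    _ = 2 * n * (n - 2).choose (k - 1) * (n - k) := by ring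

lemma exists_two_clusters {ι : Type*} [Fintype ι] (c : ι → ℝ) (δ : ℝ)
    (h : ∀ i j, ∃ m : ℝ, (m = -1 ∨ m = 0 ∨ m = 1) ∧ (c i - c j - m) ^ 2 ≤ δ) :
    ∃ a b : ℝ, |a - b| = 1 ∧ ∃ S : Finset ι, 2 * #S ≤ Fintype.card ι ∧
      (∀ j ∈ S, (c j - a) ^ 2 ≤ δ) ∧ (∀ j ∉ S, (c j - b) ^ 2 ≤ δ) := by
  classical
  cases isEmpty_or_nonempty ι
  · exact ⟨0, 1, by norm_num, ∅, by simp, by simp, fun j => isEmptyElim j⟩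
  obtain ⟨j₀, -, hj₀⟩ := exists_min_image univ c univ_nonempty
  have hnear : ∀ j, (c j - c j₀) ^ 2 ≤ δ ∨ (c j - (c j₀ + 1)) ^ 2 ≤ δ := by
    intro j
    obtain ⟨m, hm, hjm⟩ := h j j₀
    have := hj₀ j (mem_univ j)
    rcases hm with rfl | rfl | rfl
    · left; nlinarith
    · left; simpa using hjm
    · right; rwa [← sub_sub]
  set S : Finset ι := {j | (c j - c j₀) ^ 2 ≤ δ}
  have hS : ∀ j, j ∉ S → (c j - (c j₀ + 1)) ^ 2 ≤ δ := fun j hj =>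
    (hnear j).resolve_left fun h => hj (by simpa [S] using h)
  by_cases hcard : 2 * #S ≤ Fintype.card ι
  · exact ⟨c j₀, c j₀ + 1, by simp, S, hcard, fun j hj => by simpa [S] using hj, hS⟩
  · refine ⟨c j₀ + 1, c j₀, by simp, Sᶜ, by rw [card_compl]; omega,
      fun j hj => hS j (by simpa using hj), fun j hj => by simpa [S] using hj⟩

lemma exists_card_mul_sq_sub_le {n k : ℕ} (f : Finset (Fin n) → ℝ) (c : Fin n → ℝ)
    (hbool : ∀ T ∈ theSlice n k, f T = 0 ∨ f T = 1) (i j : Fin n) :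
    ∃ m : ℝ, (m = -1 ∨ m = 0 ∨ m = 1) ∧
      #{T ∈ theSlice n k | i ∈ T ∧ j ∉ T} * (c i - c j - m) ^ 2 ≤
        4 * ∑ T ∈ theSlice n k, (f T - ∑ x ∈ T, c x) ^ 2 := by
  set A := {T ∈ theSlice n k | i ∈ T ∧ j ∉ T}
  set u : Finset (Fin n) → ℝ := fun T => (f T - ∑ x ∈ T, c x) ^ 2
  have hu : ∀ T, 0 ≤ u T := fun T => sq_nonneg _
  rcases A.eq_empty_or_nonempty with hA | hA
  · exact ⟨0, by norm_num, by simpa [hA] using sum_nonneg fun T _ => hu T⟩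
  have hmemA : ∀ T ∈ A, T ∈ theSlice n k ∧ i ∈ T ∧ j ∉ T := fun _ => mem_filter.1
  have hmaps : ∀ T ∈ A, exchange i j T ∈ theSlice n k := fun T hT => by
    obtain ⟨hT, hi, hj⟩ := hmemA T hT
    rw [theSlice, mem_powersetCard_univ] at hT ⊢
    rw [card_exchange hi hj, hT]
  obtain ⟨T₀, hT₀, hmin⟩ := exists_min_image A (fun T => u T + u (exchange i j T)) hA
  obtain ⟨hT₀s, hi, hj⟩ := hmemA T₀ hT₀
  refine ⟨f T₀ - f (exchange i j T₀), ?_, ?_⟩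
  · rcases hbool T₀ hT₀s with h | h <;> rcases hbool _ (hmaps T₀ hT₀) with h' | h' <;>
      norm_num [h, h']
  -- `c i - c j - m` is the difference of the two errors, and `(a - b)² ≤ 2 (a² + b²)`
  have hjump : (c i - c j - (f T₀ - f (exchange i j T₀))) ^ 2 ≤
      2 * (u T₀ + u (exchange i j T₀)) := by
    simp only [u, sum_exchange c hi hj]
    nlinarith [sq_nonneg (f T₀ - ∑ x ∈ T₀, c x +
      (f (exchange i j T₀) - (∑ x ∈ T₀, c x - c i + c j)))]
  have himage : A.image (exchange i j) ⊆ theSlice n k := by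
    simpa [image_subset_iff] using hmaps
  calc #A * (c i - c j - (f T₀ - f (exchange i j T₀))) ^ 2
      ≤ #A * (2 * (u T₀ + u (exchange i j T₀))) := by gcongr
    _ ≤ 2 * ∑ T ∈ A, (u T + u (exchange i j T)) := by
      rw [mul_left_comm, ← nsmul_eq_mul]
      exact mul_le_mul_of_nonneg_left (card_nsmul_le_sum _ _ _ hmin) zero_le_two
    _ = 2 * (∑ T ∈ A, u T + ∑ T ∈ A.image (exchange i j), u T) := by
      rw [sum_add_distrib,
        sum_image fun T hT T' hT' => injOn_exchange (hmemA T hT).2 (hmemA T' hT').2]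
    _ ≤ 2 * (∑ T ∈ theSlice n k, u T + ∑ T ∈ theSlice n k, u T) := by
      gcongr 2 * (?_ + ?_)
      · exact sum_le_sum_of_subset_of_nonneg (filter_subset _ _) fun T _ _ => hu T
      · exact sum_le_sum_of_subset_of_nonneg himage fun T _ _ => hu T
    _ = 4 * ∑ T ∈ theSlice n k, u T := by ring

lemma mul_choose_le_card_filter_mem_notMem {n k : ℕ} (hk : 1 ≤ k) (hkn : 2 * k ≤ n)
    {i j : Fin n} (hij : i ≠ j) :
    (k : ℝ) * n.choose k ≤ 2 * n * #{T ∈ theSlice n k | i ∈ T ∧ j ∉ T} := by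
  rw [theSlice, card_powersetCard_filter_mem_notMem hij hk, Fintype.card_fin]
  exact_mod_cast mul_choose_le_mul_choose_sub_two n k hk hkn

/-- concentration of the coefficients. If a Boolean `f` on the slice
(`2 ≤ k ≤ n/2`, `p = k/n`) is `ε`-close to `∑ᵢ cᵢ xᵢ`, then the coefficients are
`√(8ε/p)`-close to two values `c, d` at distance exactly `1`, with the value `c`
taken on a set of at most `n/2` coordinates. -/
theorem coefficient_concentration (n k : ℕ) (hk : 2 ≤ k) (hkn : 2 * k ≤ n)
    (f : Finset (Fin n) → ℝ) (c : Fin n → ℝ) (ε : ℝ)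
    (hbool : ∀ T ∈ theSlice n k, f T = 0 ∨ f T = 1)
    (hclose : sliceExp n k (fun T => (f T - ∑ i ∈ T, c i) ^ 2) ≤ ε) :
    ∃ a b : ℝ, |a - b| = 1 ∧ ∃ S : Finset (Fin n), 2 * S.card ≤ n ∧
      (∀ j ∈ S, (c j - a) ^ 2 ≤ 8 * ε / ((k : ℝ) / n)) ∧
      (∀ j ∉ S, (c j - b) ^ 2 ≤ 8 * ε / ((k : ℝ) / n)) := by
  have hk₀ : (0 : ℝ) < k := by exact_mod_cast (by omega : 0 < k)
  have hchoose : (0 : ℝ) < n.choose k := by exact_mod_cast Nat.choose_pos (by omega : k ≤ n)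
  have hsum := (div_le_iff₀ hchoose).1 hclose
  have hε : 0 ≤ ε := nonneg_of_mul_nonneg_left
    ((sum_nonneg fun T _ => sq_nonneg (f T - ∑ i ∈ T, c i)).trans hsum) hchoose
  have hpair : ∀ i j, ∃ m : ℝ, (m = -1 ∨ m = 0 ∨ m = 1) ∧
      (c i - c j - m) ^ 2 ≤ 8 * ε / ((k : ℝ) / n) := by
    intro i j
    by_cases hij : i = j
    · have hδ : 0 ≤ 8 * ε / ((k : ℝ) / n) := by positivity
      exact ⟨0, by norm_num, by simpa [hij] using hδ⟩
    obtain ⟨m, hm, hbound⟩ := exists_card_mul_sq_sub_le f c hbool i j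
    have hcount := mul_choose_le_card_filter_mem_notMem (by omega) hkn hij
    have hA : (0 : ℝ) < #{T ∈ theSlice n k | i ∈ T ∧ j ∉ T} := by
      by_contra! h
      nlinarith [mul_pos hk₀ hchoose]
    refine ⟨m, hm, ?_⟩
    rw [div_div_eq_mul_div, le_div_iff₀ hk₀]
    refine le_of_mul_le_mul_left ?_ hA
    nlinarith [mul_le_mul_of_nonneg_left hcount hε]
  simpa using exists_two_clusters c _ hpair
end
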